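/- arXiv:1211.6655 — 4 statements merged into one kernel-verified Lean document; each statement's English description precedes it below -/
import Mathlib

section
/- Let g > 0, Δx > 0, Δt > 0 and h_{j−1}, h_j, h_{j+1} > 0, and consider lake-at-rest data W_i = (h_i, 0) for i = j−1, j, j+1. Then the conservative Q-scheme update Ŵ_j = W_j − (Δt/Δx)·(φ(W_j, W_{j+1}) − φ(W_{j−1}, W_j)) has components ĥ_j = h_j + (Δt/(2Δx))·((h_{j+1} − h_j)·√(g·(h_{j+1} + h_j)/2) − (h_j − h_{j−1})·√(g·(h_j + h_{j−1})/2)) and q̂_j = −(g·Δt/(4Δx))·(h_{j+1}² − h_{j−1}²). -/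
theorem q_scheme_update_lake_at_rest_general (g Δx Δt hm h0 hp : ℝ) :
    let F : ℝ × ℝ → ℝ × ℝ := fun p => (p.2, p.2 ^ 2 / p.1 + g * p.1 ^ 2 / 2)
    let φ : ℝ × ℝ → ℝ × ℝ → ℝ × ℝ := fun U V =>
      (1 / 2 : ℝ) • (F U + F V) -
        (1 / 2 : ℝ) • (Real.sqrt (g * (U.1 + V.1) / 2) • (V - U))
    let W : ℝ × ℝ := (h0, 0)
    let What : ℝ × ℝ := W - (Δt / Δx) • (φ (h0, 0) (hp, 0) - φ (hm, 0) (h0, 0))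
    What.1 = h0 + Δt / (2 * Δx) *
        ((hp - h0) * Real.sqrt (g * (hp + h0) / 2) -
          (h0 - hm) * Real.sqrt (g * (h0 + hm) / 2)) ∧
      What.2 = -(g * Δt / (4 * Δx)) * (hp ^ 2 - hm ^ 2) := by
  intro F φ W What
  have hF (h : ℝ) : F (h, 0) = (0, g * h ^ 2 / 2) := by
    simp [F]
  have hφ (a b : ℝ) :
      φ (a, 0) (b, 0) = (-(b - a) * Real.sqrt (g * (b + a) / 2) / 2, g * (a ^ 2 + b ^ 2) / 4) := by
    simp only [φ, hF, add_comm a b, Prod.mk_add_mk, Prod.mk_sub_mk, Prod.smul_mk, smul_eq_mul]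
    ext <;> ring
  simp only [What, W, hφ, Prod.mk_sub_mk, Prod.smul_mk, smul_eq_mul]
  constructor <;> ring

/-- Let `g > 0`, `Δx > 0`, `Δt > 0` and `h₋, h₀, h₊ > 0` (standing for
`h_{j−1}, h_j, h_{j+1}`), with lake-at-rest data `Wᵢ = (hᵢ, 0)`. Then the conservative
Q-scheme update `Ŵ_j = W_j − (Δt/Δx)·(φ(W_j, W_{j+1}) − φ(W_{j−1}, W_j))` has components
`ĥ_j = h_j + (Δt/(2Δx))·((h₊ − h₀)·√(g·(h₊ + h₀)/2) − (h₀ − h₋)·√(g·(h₀ + h₋)/2))` and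
`q̂_j = −(g·Δt/(4Δx))·(h₊² − h₋²)`. -/
theorem q_scheme_update_lake_at_rest (g Δx Δt hm h0 hp : ℝ)
    (hg : 0 < g) (hΔx : 0 < Δx) (hΔt : 0 < Δt)
    (hhm : 0 < hm) (hh0 : 0 < h0) (hhp : 0 < hp) :
    let F : ℝ × ℝ → ℝ × ℝ := fun p => (p.2, p.2 ^ 2 / p.1 + g * p.1 ^ 2 / 2)
    let φ : ℝ × ℝ → ℝ × ℝ → ℝ × ℝ := fun U V =>
      (1 / 2 : ℝ) • (F U + F V) -
        (1 / 2 : ℝ) • (Real.sqrt (g * (U.1 + V.1) / 2) • (V - U))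
    let W : ℝ × ℝ := (h0, 0)
    let What : ℝ × ℝ := W - (Δt / Δx) • (φ (h0, 0) (hp, 0) - φ (hm, 0) (h0, 0))
    What.1 = h0 + Δt / (2 * Δx) *
        ((hp - h0) * Real.sqrt (g * (hp + h0) / 2) -
          (h0 - hm) * Real.sqrt (g * (h0 + hm) / 2)) ∧
      What.2 = -(g * Δt / (4 * Δx)) * (hp ^ 2 - hm ^ 2) :=
  q_scheme_update_lake_at_rest_general g Δx Δt hm h0 hp
end

section
/- Let g > 0 and let H : ℝ → ℝ be twice continuously differentiable with 0 < m ≤ H(x) ≤ M₀, |H'(x)| ≤ M₁ and |H''(x)| ≤ M₂ for all x ∈ ℝ. Then there exists a constant C > 0 such that for every x ∈ ℝ and every Δx ∈ (0, 1], |(H(x+Δx) − H(x))·√(g·(H(x+Δx) + H(x))/2) − (H(x) − H(x−Δx))·√(g·(H(x) + H(x−Δx))/2)| ≤ C·Δx². -/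
/-!
Both numerical mass fluxes are a height jump times the speed `√(g·h̄)` of a face average `h̄`.
Their difference splits as (difference of the jumps)·(speed) + (jump)·(difference of the
speeds). The first jump difference is a second difference of `H`, hence `O(Δx²)`; in the second
term the jump is `O(Δx)` by the mean value theorem, and so is the speed difference, because `√`
is Lipschitz on `[g·m, ∞)` and the two face averages differ by `O(Δx)`.
-/

section MeanValue

variable {E : Type*} [NormedAddCommGroup E] [NormedSpace ℝ E] {f : ℝ → E} {C : ℝ}

theorem norm_sub_le_of_forall_norm_deriv_le (hf : Differentiable ℝ f)
    (bound : ∀ t, ‖deriv f t‖ ≤ C) (y z : ℝ) : ‖f y - f z‖ ≤ C * |y - z| := by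
  simpa only [Real.norm_eq_abs] using
    convex_univ.norm_image_sub_le_of_norm_deriv_le (fun t _ => hf t) (fun t _ => bound t)
      (Set.mem_univ z) (Set.mem_univ y)

theorem norm_second_difference_le (hf : Differentiable ℝ f) (hf' : Differentiable ℝ (deriv f))
    (bound : ∀ t, ‖deriv (deriv f) t‖ ≤ C) (x h : ℝ) :
    ‖(f (x + h) - f x) - (f x - f (x - h))‖ ≤ C * h ^ 2 := by
  have hφ : ∀ t, HasDerivAt (fun s => f (s + h) - f s) (deriv f (t + h) - deriv f t) t :=
    fun t => ((hf (t + h)).hasDerivAt.comp_add_const t h).sub (hf t).hasDerivAt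
  have hφ' : ∀ t, ‖deriv f (t + h) - deriv f t‖ ≤ C * |h| := fun t => by
    simpa using norm_sub_le_of_forall_norm_deriv_le hf' bound (t + h) t
  calc ‖(f (x + h) - f x) - (f x - f (x - h))‖
      = ‖(f (x + h) - f x) - (f (x - h + h) - f (x - h))‖ := by rw [sub_add_cancel]
    _ ≤ C * |h| * ‖x - (x - h)‖ :=
        convex_univ.norm_image_sub_le_of_norm_hasDerivWithin_le
          (fun t _ => (hφ t).hasDerivWithinAt) (fun t _ => hφ' t)
          (Set.mem_univ (x - h)) (Set.mem_univ x)
    _ = C * h ^ 2 := by rw [sub_sub_cancel, Real.norm_eq_abs, mul_assoc, abs_mul_abs_self, sq]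

end MeanValue

theorem Real.abs_sqrt_sub_sqrt_le {a u v : ℝ} (ha : 0 < a) (hu : a ≤ u) (hv : a ≤ v) :
    |√u - √v| ≤ |u - v| / (2 * √a) := by
  have hsum : 2 * √a ≤ √u + √v := by
    linarith [Real.sqrt_le_sqrt hu, Real.sqrt_le_sqrt hv]
  have hpos : 0 < 2 * √a := by positivity
  have hprod : (√u - √v) * (√u + √v) = u - v := by
    rw [mul_comm, ← mul_self_sub_mul_self, Real.mul_self_sqrt (ha.le.trans hu),
      Real.mul_self_sqrt (ha.le.trans hv)]
  rw [le_div_iff₀ hpos, ← hprod, abs_mul, abs_of_pos (hpos.trans_le hsum)]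
  exact mul_le_mul_of_nonneg_left hsum (abs_nonneg _)

theorem abs_mul_sub_mul_le (a b s t : ℝ) :
    |a * s - b * t| ≤ |a - b| * |s| + |b| * |s - t| := by
  calc |a * s - b * t| = |(a - b) * s + b * (s - t)| := by ring_nf
    _ ≤ |a - b| * |s| + |b| * |s - t| := by
        rw [← abs_mul, ← abs_mul]
        exact abs_add_le _ _

/-- With zero discharge the Q-scheme mass flux across a face with heights `hL`, `hR` reduces
to its viscosity part `-(hR - hL) √(g h̄) / 2`, `h̄ = (hL + hR) / 2`; this is `-2` times it. -/
noncomputable def lakeAtRestMassFlux (g hR hL : ℝ) : ℝ :=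
  (hR - hL) * √(g * (hR + hL) / 2)

theorem abs_lakeAtRestMassFlux_sub_le {g m M₀ a b c : ℝ} (hg : 0 < g) (hm : 0 < m)
    (ha : m ≤ a) (hb : m ≤ b) (hc : m ≤ c) (haM : a ≤ M₀) (hbM : b ≤ M₀) :
    |lakeAtRestMassFlux g a b - lakeAtRestMassFlux g b c| ≤
      |(a - b) - (b - c)| * √(g * M₀) + |b - c| * (g * |a - c| / (4 * √(g * m))) := by
  have face_lower : ∀ {y z}, m ≤ y → m ≤ z → g * m ≤ g * (y + z) / 2 := fun hy hz => by
    nlinarith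
  have speed_le : √(g * (a + b) / 2) ≤ √(g * M₀) := Real.sqrt_le_sqrt (by nlinarith)
  have speed_diff : |√(g * (a + b) / 2) - √(g * (b + c) / 2)| ≤ g * |a - c| / (4 * √(g * m)) :=
    calc _ ≤ |g * (a + b) / 2 - g * (b + c) / 2| / (2 * √(g * m)) :=
          Real.abs_sqrt_sub_sqrt_le (mul_pos hg hm) (face_lower ha hb) (face_lower hb hc)
      _ = g * |a - c| / (4 * √(g * m)) := by
          rw [show g * (a + b) / 2 - g * (b + c) / 2 = g / 2 * (a - c) by ring, abs_mul,
            abs_of_pos (half_pos hg)]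
          ring
  refine (abs_mul_sub_mul_le _ _ _ _).trans ?_
  rw [abs_of_nonneg (Real.sqrt_nonneg _)]
  gcongr

/-- Let `g > 0` and let `H : ℝ → ℝ` be twice continuously differentiable with
`0 < m ≤ H(x) ≤ M₀`, `|H'(x)| ≤ M₁` and `|H''(x)| ≤ M₂` for all `x`. Then there exists
`C > 0` such that for every `x` and every `Δx ∈ (0, 1]`,
`|(H(x+Δx) − H(x))·√(g·(H(x+Δx) + H(x))/2) − (H(x) − H(x−Δx))·√(g·(H(x) + H(x−Δx))/2)|
  ≤ C·Δx²`. -/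
theorem q_scheme_mass_flux_second_order (g m M₀ M₁ M₂ : ℝ) (hg : 0 < g) (hm : 0 < m)
    (H : ℝ → ℝ) (hH : ContDiff ℝ 2 H)
    (hlow : ∀ x, m ≤ H x) (hup : ∀ x, H x ≤ M₀)
    (hd1 : ∀ x, |deriv H x| ≤ M₁) (hd2 : ∀ x, |deriv (deriv H) x| ≤ M₂) :
    ∃ C > 0, ∀ x Δx : ℝ, 0 < Δx → Δx ≤ 1 →
      |(H (x + Δx) - H x) * Real.sqrt (g * (H (x + Δx) + H x) / 2) -
          (H x - H (x - Δx)) * Real.sqrt (g * (H x + H (x - Δx)) / 2)| ≤ C * Δx ^ 2 := by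
  have hH₁ : Differentiable ℝ H := hH.differentiable (by norm_num)
  have lip : ∀ y z, |H y - H z| ≤ M₁ * |y - z| := norm_sub_le_of_forall_norm_deriv_le hH₁ hd1
  have hM₁ : 0 ≤ M₁ := (abs_nonneg _).trans (hd1 0)
  set K := √(g * M₀) * M₂ + g * M₁ ^ 2 / (2 * √(g * m))
  refine ⟨max K 1, by positivity, fun x Δx hΔx _ => ?_⟩
  have second_diff : |(H (x + Δx) - H x) - (H x - H (x - Δx))| ≤ M₂ * Δx ^ 2 :=
    norm_second_difference_le hH₁ hH.differentiable_deriv_two hd2 x Δx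
  have jump : |H x - H (x - Δx)| ≤ M₁ * Δx := by
    simpa [abs_of_pos hΔx] using lip x (x - Δx)
  have wide_jump : |H (x + Δx) - H (x - Δx)| ≤ M₁ * (2 * Δx) :=
    (lip _ _).trans_eq (by rw [abs_of_pos (by linarith)]; ring)
  calc _ = |lakeAtRestMassFlux g (H (x + Δx)) (H x) - lakeAtRestMassFlux g (H x) (H (x - Δx))| :=
        rfl
    _ ≤ M₂ * Δx ^ 2 * √(g * M₀) + M₁ * Δx * (g * (M₁ * (2 * Δx)) / (4 * √(g * m))) := by
        refine (abs_lakeAtRestMassFlux_sub_le hg hm (hlow _) (hlow _) (hlow _) (hup _)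
          (hup _)).trans ?_
        gcongr
    _ = K * Δx ^ 2 := by ring
    _ ≤ max K 1 * Δx ^ 2 := by gcongr; exact le_max_left K 1
end

section
/- (Approximate C-property of Q-tra1.) Let g > 0, μ > 0, A ∈ ℝ, and let H : ℝ → ℝ be twice continuously differentiable with 0 < m ≤ H(x) ≤ M₀, |H'(x)| ≤ M₁ and |H''(x)| ≤ M₂ for all x; set b := A − H. Then there exists C > 0 such that for every x ∈ ℝ and every Δx ∈ (0, 1], putting Δt := μ·Δx, h₋ := H(x−Δx), h₀ := H(x), h₊ := H(x+Δx), ĥ := h₀ + (Δt/(2Δx))·((h₊ − h₀)·√(g·(h₊ + h₀)/2) − (h₀ − h₋)·√(g·(h₀ + h₋)/2)), q̂ := −(g·Δt/(4Δx))·(h₊² − h₋²), h¹ := ĥ, and q¹ := q̂ − g·((b(x+Δx) − b(x−Δx))/(2Δx))·(Δt/2)·(h₀ + ĥ), one has |h¹ − H(x)| ≤ C·Δx² and |q¹| ≤ C·Δx². -/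
/-!
At rest the Q-scheme flux difference splits as
`((h₊ - h₀) - (h₀ - h₋)) c₊ + (h₀ - h₋)(c₊ - c₋)` with celerities `c± = √(g h̄±)`: a second
difference of `H` (which is `O(Δx²)` as `H''` is bounded) times a bounded celerity, plus a first
difference times a celerity difference (`O(Δx)` each, `√` being Lipschitz above `g m`). This gives
the depth estimate. For the discharge, the centred source term cancels the flux up to
`(g μ / 4) (h₊ - h₋) ((h¹ - h₀) - (h₊ - 2 h₀ + h₋))`, a product of an `O(Δx)` and an `O(Δx²)`
factor.
-/

open Set

theorem abs_sub_le_of_abs_deriv_le {f : ℝ → ℝ} {C : ℝ} (hf : Differentiable ℝ f)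
    (bound : ∀ t, |deriv f t| ≤ C) (x y : ℝ) : |f y - f x| ≤ C * |y - x| :=
  convex_univ.norm_image_sub_le_of_norm_deriv_le (fun t _ => hf t) (fun t _ => bound t)
    (mem_univ x) (mem_univ y)

theorem abs_sub_sub_deriv_mul_le {f : ℝ → ℝ} {C : ℝ} (hf : Differentiable ℝ f)
    (hf' : Differentiable ℝ (deriv f)) (bound : ∀ t, |deriv (deriv f) t| ≤ C) (x h : ℝ) :
    |f (x + h) - f x - deriv f x * h| ≤ C * h ^ 2 := by
  have hC : 0 ≤ C := (abs_nonneg _).trans (bound 0)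
  have hφ : ∀ t, HasDerivAt (fun t => f t - deriv f x * t) (deriv f t - deriv f x) t := fun t =>
    ((hf t).hasDerivAt.sub ((hasDerivAt_id t).const_mul (deriv f x))).congr_deriv (by simp)
  have hφ' : ∀ t ∈ uIcc x (x + h), |deriv (fun t => f t - deriv f x * t) t| ≤ C * |h| := by
    intro t ht
    rw [(hφ t).deriv]
    calc |deriv f t - deriv f x| ≤ C * |t - x| := abs_sub_le_of_abs_deriv_le hf' bound x t
      _ ≤ C * |h| :=
        mul_le_mul_of_nonneg_left (by simpa using abs_sub_left_of_mem_uIcc ht) hC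
  have := (convex_uIcc x (x + h)).norm_image_sub_le_of_norm_deriv_le
    (fun t _ => (hφ t).differentiableAt) hφ' left_mem_uIcc right_mem_uIcc
  calc |f (x + h) - f x - deriv f x * h|
      = |(f (x + h) - deriv f x * (x + h)) - (f x - deriv f x * x)| := by ring_nf
    _ ≤ C * |h| * |x + h - x| := this
    _ = C * h ^ 2 := by rw [add_sub_cancel_left, mul_assoc, ← abs_mul, ← sq, abs_sq]

theorem abs_second_difference_le {f : ℝ → ℝ} {C : ℝ} (hf : Differentiable ℝ f)
    (hf' : Differentiable ℝ (deriv f)) (bound : ∀ t, |deriv (deriv f) t| ≤ C) (x h : ℝ) :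
    |(f (x + h) - f x) - (f x - f (x - h))| ≤ 2 * C * h ^ 2 := by
  have hplus := abs_sub_sub_deriv_mul_le hf hf' bound x h
  have hminus := abs_sub_sub_deriv_mul_le hf hf' bound x (-h)
  rw [← sub_eq_add_neg, neg_sq] at hminus
  calc |(f (x + h) - f x) - (f x - f (x - h))|
      = |(f (x + h) - f x - deriv f x * h) + (f (x - h) - f x - deriv f x * -h)| := by ring_nf
    _ ≤ C * h ^ 2 + C * h ^ 2 := (abs_add_le _ _).trans (add_le_add hplus hminus)
    _ = 2 * C * h ^ 2 := by ring

theorem abs_central_difference_le {f : ℝ → ℝ} {C : ℝ} (hf : Differentiable ℝ f)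
    (bound : ∀ t, |deriv f t| ≤ C) (x : ℝ) {h : ℝ} (hh : 0 ≤ h) :
    |f (x + h) - f (x - h)| ≤ 2 * C * h := by
  have := abs_sub_le_of_abs_deriv_le hf bound (x - h) (x + h)
  rwa [show x + h - (x - h) = 2 * h by ring, abs_of_nonneg (by positivity : (0 : ℝ) ≤ 2 * h),
    ← mul_assoc, mul_comm C] at this

theorem abs_sqrt_sub_sqrt_le {a b c : ℝ} (hc : 0 < c) (ha : c ≤ a) (hb : c ≤ b) :
    |√a - √b| ≤ |a - b| / (2 * √c) := by
  have hsc : 0 < √c := Real.sqrt_pos.mpr hc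
  have hsum : 2 * √c ≤ √a + √b := by
    linarith [Real.sqrt_le_sqrt ha, Real.sqrt_le_sqrt hb]
  have hdiff : a - b = (√a - √b) * (√a + √b) := by
    ring_nf
    rw [Real.sq_sqrt (hc.le.trans ha), Real.sq_sqrt (hc.le.trans hb)]
  rw [le_div_iff₀ (by positivity), hdiff, abs_mul,
    abs_of_pos (hsc.trans_le (by linarith) : 0 < √a + √b)]
  gcongr

/-- The flux difference of the Q-scheme at rest: the depth jump across each interface times
the celerity `√(g h̄)` at the mean depth `h̄` of the two adjacent cells. -/
noncomputable def fluxDifference (g hminus h0 hplus : ℝ) : ℝ :=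
  (hplus - h0) * √(g * (hplus + h0) / 2) - (h0 - hminus) * √(g * (h0 + hminus) / 2)

theorem abs_fluxDifference_le {g m M hminus h0 hplus : ℝ} (hg : 0 < g) (hm : 0 < m)
    (hminus_ge : m ≤ hminus) (h0_ge : m ≤ h0) (hplus_ge : m ≤ hplus) (h0_le : h0 ≤ M)
    (hplus_le : hplus ≤ M) :
    |fluxDifference g hminus h0 hplus| ≤ |(hplus - h0) - (h0 - hminus)| * √(g * M) +
      |h0 - hminus| * (g * |hplus - hminus| / (4 * √(g * m))) := by
  unfold fluxDifference
  set cplus := √(g * (hplus + h0) / 2)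
  set cminus := √(g * (h0 + hminus) / 2)
  have hcplus : cplus ≤ √(g * M) := Real.sqrt_le_sqrt (by nlinarith)
  have hc : |cplus - cminus| ≤ g * |hplus - hminus| / (4 * √(g * m)) := by
    calc |cplus - cminus|
        ≤ |g * (hplus + h0) / 2 - g * (h0 + hminus) / 2| / (2 * √(g * m)) :=
          abs_sqrt_sub_sqrt_le (by positivity) (by nlinarith) (by nlinarith)
      _ = g * |hplus - hminus| / (4 * √(g * m)) := by
          rw [show g * (hplus + h0) / 2 - g * (h0 + hminus) / 2 = g / 2 * (hplus - hminus) by ring,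
            abs_mul, abs_of_pos (by positivity : 0 < g / 2)]
          ring
  calc |(hplus - h0) * cplus - (h0 - hminus) * cminus|
      = |((hplus - h0) - (h0 - hminus)) * cplus + (h0 - hminus) * (cplus - cminus)| := by
        ring_nf
    _ ≤ |(hplus - h0) - (h0 - hminus)| * |cplus| + |h0 - hminus| * |cplus - cminus| := by
        rw [← abs_mul, ← abs_mul]; exact abs_add_le _ _
    _ ≤ _ := by
        rw [abs_of_nonneg (Real.sqrt_nonneg _)]
        gcongr

theorem abs_fluxDifference_le_mul_sq {g m M₀ M₁ M₂ : ℝ} (hg : 0 < g) (hm : 0 < m) {H : ℝ → ℝ}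
    (hH₁ : Differentiable ℝ H) (hH₂ : Differentiable ℝ (deriv H)) (hlow : ∀ x, m ≤ H x)
    (hup : ∀ x, H x ≤ M₀) (hd1 : ∀ x, |deriv H x| ≤ M₁) (hd2 : ∀ x, |deriv (deriv H) x| ≤ M₂)
    (x : ℝ) {Δx : ℝ} (hΔx : 0 ≤ Δx) :
    |fluxDifference g (H (x - Δx)) (H x) (H (x + Δx))| ≤
      (2 * M₂ * √(g * M₀) + g * M₁ ^ 2 / (2 * √(g * m))) * Δx ^ 2 := by
  have hleft : |H x - H (x - Δx)| ≤ M₁ * Δx := by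
    simpa [abs_of_nonneg hΔx] using abs_sub_le_of_abs_deriv_le hH₁ hd1 (x - Δx) x
  have hM₁ : 0 ≤ M₁ := (abs_nonneg _).trans (hd1 0)
  calc _ ≤ _ := abs_fluxDifference_le hg hm (hlow _) (hlow _) (hlow _) (hup _) (hup _)
    _ ≤ 2 * M₂ * Δx ^ 2 * √(g * M₀) + M₁ * Δx * (g * (2 * M₁ * Δx) / (4 * √(g * m))) := by
        gcongr
        exacts [abs_second_difference_le hH₁ hH₂ hd2 x Δx, abs_central_difference_le hH₁ hd1 x hΔx]
    _ = _ := by field_simp; ring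

/-- Depth `h¹` after one Q-tra1 step from depths `hminus, h0, hplus` at `x - Δx, x, x + Δx`,
with `Δt = μ Δx`. -/
noncomputable def qtra1Depth (g μ Δx hminus h0 hplus : ℝ) : ℝ :=
  h0 + μ * Δx / (2 * Δx) * fluxDifference g hminus h0 hplus

/-- Discharge `q¹` after one Q-tra1 step from rest, the bottom being `A - h`. -/
noncomputable def qtra1Discharge (g μ A Δx hminus h0 hplus : ℝ) : ℝ :=
  -(g * (μ * Δx) / (4 * Δx)) * (hplus ^ 2 - hminus ^ 2) -
    g * (((A - hplus) - (A - hminus)) / (2 * Δx)) * (μ * Δx / 2) *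
      (h0 + qtra1Depth g μ Δx hminus h0 hplus)

theorem qtra1Depth_sub {g μ Δx : ℝ} (hΔx : Δx ≠ 0) (hminus h0 hplus : ℝ) :
    qtra1Depth g μ Δx hminus h0 hplus - h0 = μ / 2 * fluxDifference g hminus h0 hplus := by
  unfold qtra1Depth
  field_simp
  ring

theorem qtra1Discharge_eq {g μ Δx : ℝ} (hΔx : Δx ≠ 0) (A hminus h0 hplus : ℝ) :
    qtra1Discharge g μ A Δx hminus h0 hplus = g * μ / 4 * (hplus - hminus) *
      (μ / 2 * fluxDifference g hminus h0 hplus - ((hplus - h0) - (h0 - hminus))) := by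
  unfold qtra1Discharge qtra1Depth
  field_simp
  ring

theorem abs_qtra1Discharge_le {g μ A Δx K M₁ M₂ hminus h0 hplus : ℝ} (hg : 0 < g) (hμ : 0 < μ)
    (hΔx : 0 < Δx) (hΔx1 : Δx ≤ 1) (hM₁ : 0 ≤ M₁)
    (hF : |fluxDifference g hminus h0 hplus| ≤ K * Δx ^ 2)
    (hD : |(hplus - h0) - (h0 - hminus)| ≤ 2 * M₂ * Δx ^ 2)
    (hcentral : |hplus - hminus| ≤ 2 * M₁ * Δx) :
    |qtra1Discharge g μ A Δx hminus h0 hplus| ≤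
      g * μ / 2 * M₁ * (μ / 2 * K + 2 * M₂) * Δx ^ 2 := by
  have hK : 0 ≤ μ / 2 * K + 2 * M₂ := by
    refine nonneg_of_mul_nonneg_left ?_ (by positivity : 0 < Δx ^ 2)
    nlinarith [(abs_nonneg _).trans hF, (abs_nonneg _).trans hD]
  rw [qtra1Discharge_eq hΔx.ne', abs_mul, abs_mul, abs_of_pos (by positivity : 0 < g * μ / 4)]
  calc g * μ / 4 * |hplus - hminus| *
        |μ / 2 * fluxDifference g hminus h0 hplus - ((hplus - h0) - (h0 - hminus))|
      ≤ g * μ / 4 * (2 * M₁ * Δx) * (μ / 2 * (K * Δx ^ 2) + 2 * M₂ * Δx ^ 2) := by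
        gcongr
        refine (abs_sub _ _).trans (add_le_add ?_ hD)
        rw [abs_mul, abs_of_pos (by positivity : 0 < μ / 2)]
        gcongr
    _ = g * μ / 2 * M₁ * (μ / 2 * K + 2 * M₂) * Δx ^ 2 * Δx := by ring
    _ ≤ g * μ / 2 * M₁ * (μ / 2 * K + 2 * M₂) * Δx ^ 2 := by
        apply mul_le_of_le_one_right _ hΔx1
        positivity

/-- Approximate C-property of Q-tra1: Let `g > 0`, `μ > 0`, `A ∈ ℝ`, and let
`H : ℝ → ℝ` be twice continuously differentiable with `0 < m ≤ H(x) ≤ M₀`, `|H'(x)| ≤ M₁`,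
`|H''(x)| ≤ M₂`; set `b := A − H`. Then there exists `C > 0` such that for every `x` and
every `Δx ∈ (0, 1]`, with `Δt := μ·Δx`, the Q-tra1 update `(h¹, q¹)` of the lake-at-rest
state satisfies `|h¹ − H(x)| ≤ C·Δx²` and `|q¹| ≤ C·Δx²`. -/
theorem q_tra1_approximate_C_property (g μ A m M₀ M₁ M₂ : ℝ) (hg : 0 < g) (hμ : 0 < μ)
    (hm : 0 < m) (H : ℝ → ℝ) (hH : ContDiff ℝ 2 H)
    (hlow : ∀ x, m ≤ H x) (hup : ∀ x, H x ≤ M₀)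
    (hd1 : ∀ x, |deriv H x| ≤ M₁) (hd2 : ∀ x, |deriv (deriv H) x| ≤ M₂) :
    let b : ℝ → ℝ := fun x => A - H x
    ∃ C > 0, ∀ x Δx : ℝ, 0 < Δx → Δx ≤ 1 →
      let Δt : ℝ := μ * Δx
      let hminus : ℝ := H (x - Δx)
      let h0 : ℝ := H x
      let hplus : ℝ := H (x + Δx)
      let hhat : ℝ := h0 + Δt / (2 * Δx) *
        ((hplus - h0) * Real.sqrt (g * (hplus + h0) / 2) -
          (h0 - hminus) * Real.sqrt (g * (h0 + hminus) / 2))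
      let qhat : ℝ := -(g * Δt / (4 * Δx)) * (hplus ^ 2 - hminus ^ 2)
      let h1 : ℝ := hhat
      let q1 : ℝ := qhat - g * ((b (x + Δx) - b (x - Δx)) / (2 * Δx)) * (Δt / 2) * (h0 + hhat)
      |h1 - H x| ≤ C * Δx ^ 2 ∧ |q1| ≤ C * Δx ^ 2 := by
  intro b
  have hH₁ : Differentiable ℝ H := hH.differentiable two_ne_zero
  have hH₂ : Differentiable ℝ (deriv H) := hH.differentiable_deriv_two
  have hM₁ : 0 ≤ M₁ := (abs_nonneg _).trans (hd1 0)
  have hM₂ : 0 ≤ M₂ := (abs_nonneg _).trans (hd2 0)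
  set K := 2 * M₂ * √(g * M₀) + g * M₁ ^ 2 / (2 * √(g * m))
  set C₁ := μ / 2 * K
  set C₂ := g * μ / 2 * M₁ * (μ / 2 * K + 2 * M₂)
  have hC₁ : 0 ≤ C₁ := by positivity
  have hC₂ : 0 ≤ C₂ := by positivity
  refine ⟨C₁ + C₂ + 1, by positivity, fun x Δx hΔx hΔx1 => ?_⟩
  have hF := abs_fluxDifference_le_mul_sq hg hm hH₁ hH₂ hlow hup hd1 hd2 x hΔx.le
  have hdepth : |qtra1Depth g μ Δx (H (x - Δx)) (H x) (H (x + Δx)) - H x| ≤ C₁ * Δx ^ 2 := by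
    rw [qtra1Depth_sub hΔx.ne', abs_mul, abs_of_pos (by positivity : 0 < μ / 2), mul_assoc]
    gcongr
  have hdischarge : |qtra1Discharge g μ A Δx (H (x - Δx)) (H x) (H (x + Δx))| ≤ C₂ * Δx ^ 2 :=
    abs_qtra1Discharge_le hg hμ hΔx hΔx1 hM₁ hF (abs_second_difference_le hH₁ hH₂ hd2 x Δx)
      (abs_central_difference_le hH₁ hd1 x hΔx.le)
  exact ⟨hdepth.trans (by gcongr; linarith), hdischarge.trans (by gcongr; linarith)⟩
end

section
/- (Exact C-property of Q-tra2.) Let g > 0, Δx > 0, Δt > 0, A ∈ ℝ and h_{j−1}, h_j, h_{j+1} > 0, and set b_i := A − h_i for i = j−1, j, j+1. Let ĥ_j, q̂_j be the Q-scheme predictor values, and define the upwinded source updates h_L := ĥ_j − (Δt/Δx)·(b_j − b_{j−1})·√(g·(h_j + h_{j−1})/2), h_R := ĥ_j + (Δt/Δx)·(b_{j+1} − b_j)·√(g·(h_{j+1} + h_j)/2), q_L := q̂_j − (g·Δt/(2Δx))·(b_j − b_{j−1})·(h_j + h_{j−1}), and q_R := q̂_j − (g·Δt/(2Δx))·(b_{j+1}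 − b_j)·(h_{j+1} + h_j). Then (h_L + h_R)/2 = h_j and (q_L + q_R)/2 = 0; that is, one full Q-tra2 step reproduces the lake-at-rest state exactly. -/
theorem q_tra2_exact_C_property_general (g Δx Δt A hm h0 hp : ℝ) :
    let bm : ℝ := A - hm
    let b0 : ℝ := A - h0
    let bp : ℝ := A - hp
    let hhat : ℝ := h0 + Δt / (2 * Δx) *
      ((hp - h0) * Real.sqrt (g * (hp + h0) / 2) -
        (h0 - hm) * Real.sqrt (g * (h0 + hm) / 2))
    let qhat : ℝ := -(g * Δt / (4 * Δx)) * (hp ^ 2 - hm ^ 2)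
    let hL : ℝ := hhat - Δt / Δx * (b0 - bm) * Real.sqrt (g * (h0 + hm) / 2)
    let hR : ℝ := hhat + Δt / Δx * (bp - b0) * Real.sqrt (g * (hp + h0) / 2)
    let qL : ℝ := qhat - g * Δt / (2 * Δx) * (b0 - bm) * (h0 + hm)
    let qR : ℝ := qhat - g * Δt / (2 * Δx) * (bp - b0) * (hp + h0)
    (hL + hR) / 2 = h0 ∧ (qL + qR) / 2 = 0 := by
  intro bm b0 bp hhat qhat hL hR qL qR
  set sm := Real.sqrt (g * (h0 + hm) / 2)
  set sp := Real.sqrt (g * (hp + h0) / 2)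
  -- At rest the free surface is flat, so every bottom jump is minus the height jump.
  have jump_left : b0 - bm = -(h0 - hm) := by simp only [b0, bm]; ring
  have jump_right : bp - b0 = -(hp - h0) := by simp only [bp, b0]; ring
  constructor
  · -- The averaged upwinded sources cancel the numerical viscosity of the predictor.
    calc (hL + hR) / 2 = hhat + Δt / (2 * Δx) * ((bp - b0) * sp - (b0 - bm) * sm) := by
          simp only [hL, hR]; ring
      _ = h0 := by rw [jump_left, jump_right]; simp only [hhat]; ring
  · -- Hydrostatic balance: each interface source is the jump of `-h² / 2`, so they telescope
    -- against the centred flux difference in `qhat`.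
    calc (qL + qR) / 2
          = qhat - g * Δt / (4 * Δx) * ((b0 - bm) * (h0 + hm) + (bp - b0) * (hp + h0)) := by
            simp only [qL, qR]; ring
      _ = 0 := by rw [jump_left, jump_right]; simp only [qhat]; ring

/-- Exact C-property of Q-tra2: Let `g > 0`, `Δx > 0`, `Δt > 0`, `A ∈ ℝ` and
`h₋, h₀, h₊ > 0` (standing for `h_{j−1}, h_j, h_{j+1}`), and set `bᵢ := A − hᵢ`. With the
Q-scheme predictor values `ĥ_j, q̂_j` and the upwinded source updates `h_L, h_R, q_L, q_R`,
one has `(h_L + h_R)/2 = h_j` and `(q_L + q_R)/2 = 0`; i.e. one full Q-tra2 step reproduces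
the lake-at-rest state exactly. -/
theorem q_tra2_exact_C_property (g Δx Δt A hm h0 hp : ℝ)
    (hg : 0 < g) (hΔx : 0 < Δx) (hΔt : 0 < Δt)
    (hhm : 0 < hm) (hh0 : 0 < h0) (hhp : 0 < hp) :
    let bm : ℝ := A - hm
    let b0 : ℝ := A - h0
    let bp : ℝ := A - hp
    let hhat : ℝ := h0 + Δt / (2 * Δx) *
      ((hp - h0) * Real.sqrt (g * (hp + h0) / 2) -
        (h0 - hm) * Real.sqrt (g * (h0 + hm) / 2))
    let qhat : ℝ := -(g * Δt / (4 * Δx)) * (hp ^ 2 - hm ^ 2)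
    let hL : ℝ := hhat - Δt / Δx * (b0 - bm) * Real.sqrt (g * (h0 + hm) / 2)
    let hR : ℝ := hhat + Δt / Δx * (bp - b0) * Real.sqrt (g * (hp + h0) / 2)
    let qL : ℝ := qhat - g * Δt / (2 * Δx) * (b0 - bm) * (h0 + hm)
    let qR : ℝ := qhat - g * Δt / (2 * Δx) * (bp - b0) * (hp + h0)
    (hL + hR) / 2 = h0 ∧ (qL + qR) / 2 = 0 :=
  q_tra2_exact_C_property_general g Δx Δt A hm h0 hp
end
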